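/- The cascade channel H = diag(h*) G is determined by the pair (α, Σ) through the dictionary: if h = F_P α and G = F_P Σ F_Lᴴ, then diag(h*) G = (F_P* •ᵣ F_P)(α* ⊗ Σ) F_Lᴴ, where •ᵣ is the row-wise Khatri-Rao product and α* ⊗ Σ the Kronecker product of the conjugated vector α with Σ. -/
import Mathlib


open Complex Matrix

/-- Row-wise (transposed) Khatri-Rao product. -/
def rowKR {M P : ℕ} (A B : Matrix (Fin M) (Fin P) ℂ) :
    Matrix (Fin M) (Fin P × Fin P) ℂ :=
  Matrix.of fun m pp => A m pp.1 * B m pp.2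

/-- Kronecker product of the conjugated vector α with Σ. -/
def kronConjVecMat {P Q : ℕ} (α : Fin P → ℂ) (S : Matrix (Fin P) (Fin Q) ℂ) :
    Matrix (Fin P × Fin P) (Fin Q) ℂ :=
  Matrix.of fun pp q => starRingEnd ℂ (α pp.1) * S pp.2 q

/-- Sparse representation of the cascade channel:
diag(conj h) G = (F_P* •ᵣ F_P)(α* ⊗ Σ) F_Lᴴ when h = F_P α, G = F_P Σ F_Lᴴ. -/
theorem cascade_channel_sparse_rep (M N P Q : ℕ)
    (FP : Matrix (Fin M) (Fin P) ℂ) (FL : Matrix (Fin N) (Fin Q) ℂ)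
    (α : Fin P → ℂ) (S : Matrix (Fin P) (Fin Q) ℂ)
    (h : Fin M → ℂ) (G : Matrix (Fin M) (Fin N) ℂ)
    (hh : h = FP.mulVec α) (hG : G = FP * S * FLᴴ) :
    Matrix.diagonal (fun m => starRingEnd ℂ (h m)) * G
      = rowKR (FP.map (starRingEnd ℂ)) FP * kronConjVecMat α S * FLᴴ := by
  subst hh hG
  ext m n
  rw [Matrix.diagonal_mul]
  simp only [Matrix.mul_apply, Matrix.mulVec, dotProduct,
    rowKR, kronConjVecMat, Matrix.of_apply, Matrix.map_apply, Matrix.conjTranspose_apply,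
    map_sum, _root_.map_mul, Finset.sum_mul, Finset.mul_sum, Fintype.sum_prod_type]
  refine Finset.sum_congr rfl fun q _ => ?_
  rw [Finset.sum_comm]
  exact Finset.sum_congr rfl fun p _ => Finset.sum_congr rfl fun p' _ => by ring
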